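/- arXiv:2106.14169 — 3 statements merged into one kernel-verified Lean document; each statement's English description precedes it below -/
import Mathlib

section
/- Let G be a finite simple graph, v a pendant vertex with unique neighbor u, and V_b ⊆ V(G) with v ∈ V_b. If S' dominates V_b \ N[u], then S' ∪ {u} dominates V_b. Moreover, the minimum size of a set dominating V_b \ N[u] is at most (minimum size of a set dominating V_b) minus 1. -/
theorem pendant_reduction_rule {V : Type*} [Fintype V] [DecidableEq V]
    (G : SimpleGraph V) [DecidableRel G.Adj] (u v : V) (Vb S' : Finset V)
    (hpendant : G.neighborFinset v = {u}) (hv : v ∈ Vb)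
    (hex : ∃ T : Finset V, ∀ w ∈ Vb, w ∈ T ∨ ∃ s ∈ T, G.Adj s w)
    (hS' : ∀ w ∈ Vb \ insert u (G.neighborFinset u), w ∈ S' ∨ ∃ s ∈ S', G.Adj s w) :
    (∀ w ∈ Vb, w ∈ insert u S' ∨ ∃ s ∈ insert u S', G.Adj s w) ∧
    sInf {n | ∃ T : Finset V,
        (∀ w ∈ Vb \ insert u (G.neighborFinset u), w ∈ T ∨ ∃ s ∈ T, G.Adj s w) ∧ T.card = n} ≤
      sInf {n | ∃ T : Finset V, (∀ w ∈ Vb, w ∈ T ∨ ∃ s ∈ T, G.Adj s w) ∧ T.card = n} - 1 := by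
  have hadj : G.Adj v u := by
    rw [← SimpleGraph.mem_neighborFinset, hpendant]; exact Finset.mem_singleton_self u
  constructor
  · intro w hw
    by_cases hwu : w ∈ insert u (G.neighborFinset u)
    · rcases Finset.mem_insert.mp hwu with h | h
      · left; rw [h]; exact Finset.mem_insert_self _ _
      · right; exact ⟨u, Finset.mem_insert_self _ _, (SimpleGraph.mem_neighborFinset _ _ _).mp h⟩
    · rcases hS' w (Finset.mem_sdiff.mpr ⟨hw, hwu⟩) with h | ⟨s, hs, hadj'⟩
      · left; exact Finset.mem_insert_of_mem h
      · right; exact ⟨s, Finset.mem_insert_of_mem hs, hadj'⟩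
  · have hRne : {n | ∃ T : Finset V, (∀ w ∈ Vb, w ∈ T ∨ ∃ s ∈ T, G.Adj s w) ∧ T.card = n}.Nonempty := by
      obtain ⟨T, hT⟩ := hex; exact ⟨T.card, T, hT, rfl⟩
    obtain ⟨T, hT, hcard⟩ := Nat.sInf_mem hRne
    -- v is dominated by v itself or by u
    have hx : ∃ x ∈ T, x = u ∨ x = v := by
      rcases hT v hv with h | ⟨s, hs, hsv⟩
      · exact ⟨v, h, Or.inr rfl⟩
      · refine ⟨s, hs, Or.inl ?_⟩
        have : s ∈ G.neighborFinset v := (SimpleGraph.mem_neighborFinset _ _ _).mpr hsv.symm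
        rw [hpendant, Finset.mem_singleton] at this; exact this
    obtain ⟨x, hxT, hxuv⟩ := hx
    have hdom : ∀ w ∈ Vb \ insert u (G.neighborFinset u),
        w ∈ T.erase x ∨ ∃ s ∈ T.erase x, G.Adj s w := by
      intro w hw
      obtain ⟨hwVb, hwN⟩ := Finset.mem_sdiff.mp hw
      have hwne_u : w ≠ u := fun h => hwN (h ▸ Finset.mem_insert_self _ _)
      have hwne_v : w ≠ v := by
        intro h
        exact hwN (Finset.mem_insert_of_mem
          ((SimpleGraph.mem_neighborFinset _ _ _).mpr (h ▸ hadj.symm)))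
      rcases hT w hwVb with h | ⟨s, hs, hsw⟩
      · left
        refine Finset.mem_erase.mpr ⟨?_, h⟩
        rcases hxuv with rfl | rfl
        · exact hwne_u
        · exact hwne_v
      · have hsx : s ≠ x := by
          intro h
          subst h
          rcases hxuv with rfl | rfl
          · exact hwN (Finset.mem_insert_of_mem
              ((SimpleGraph.mem_neighborFinset _ _ _).mpr hsw))
          · have : w ∈ G.neighborFinset s := (SimpleGraph.mem_neighborFinset _ _ _).mpr hsw
            rw [hpendant, Finset.mem_singleton] at this
            exact hwne_u this
        exact Or.inr ⟨s, Finset.mem_erase.mpr ⟨hsx, hs⟩, hsw⟩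
    calc sInf {n | ∃ T : Finset V,
          (∀ w ∈ Vb \ insert u (G.neighborFinset u), w ∈ T ∨ ∃ s ∈ T, G.Adj s w) ∧ T.card = n}
        ≤ (T.erase x).card := Nat.sInf_le ⟨T.erase x, hdom, rfl⟩
      _ = T.card - 1 := Finset.card_erase_of_mem hxT
      _ = _ - 1 := by rw [hcard]
end

section
/- Let G be a finite simple graph, V_b ⊆ V(G), X ⊆ V_b, and ψ : X → V_b \ X injective satisfying: for all x ∈ X, ψ(x) ∉ N[x]; for all x₁, x₂ ∈ X, ψ(x₂) ∉ N(x₁); and for distinct x₁, x₂ ∈ X, N[ψ(x₁)] ∩ N[ψ(x₂)] = ∅. If S' dominates V_b \ N[X], then S' ∪ X dominates V_b and |S' ∪ X| ≤ 2|S'|. -/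
/-!
Each `ψ x` lies in `V_b \ N[X]`, so `S'` meets the closed neighbourhood `N[ψ x]`. These closed
neighbourhoods are pairwise disjoint, so distinct `x` are charged to distinct vertices of `S'`,
giving `|X| ≤ |S'|`.
-/

open Finset

theorem Finset.card_le_card_of_pairwiseDisjoint_meet {ι α : Type*} {X : Finset ι} {S : Finset α}
    {A : ι → Finset α} (hA : ∀ x₁ ∈ X, ∀ x₂ ∈ X, x₁ ≠ x₂ → Disjoint (A x₁) (A x₂))
    (hS : ∀ x ∈ X, ∃ s ∈ S, s ∈ A x) : #X ≤ #S :=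
  card_le_card_of_forall_subsingleton (fun x s => s ∈ A x) hS fun s _ x₁ hx₁ x₂ hx₂ => by
    by_contra hne
    exact disjoint_left.mp (hA x₁ hx₁.1 x₂ hx₂.1 hne) hx₁.2 hx₂.2

namespace SimpleGraph

variable {V : Type*} (G : SimpleGraph V)

def Dominates (S W : Finset V) : Prop :=
  ∀ w ∈ W, w ∈ S ∨ ∃ s ∈ S, G.Adj s w

variable {G} [G.LocallyFinite] [DecidableEq V]

theorem Dominates.exists_mem_insert_neighborFinset {S W : Finset V} (hS : G.Dominates S W)
    {w : V} (hw : w ∈ W) : ∃ s ∈ S, s ∈ insert w (G.neighborFinset w) := by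
  rcases hS w hw with hwS | ⟨s, hs, hsw⟩
  · exact ⟨w, hwS, mem_insert_self _ _⟩
  · exact ⟨s, hs, mem_insert_of_mem ((G.mem_neighborFinset w s).mpr hsw.symm)⟩

theorem Dominates.union_of_sdiff {S W X : Finset V}
    (hS : G.Dominates S (W \ (X ∪ X.biUnion (fun x => G.neighborFinset x)))) :
    G.Dominates (S ∪ X) W := by
  intro w hw
  by_cases hwX : w ∈ X ∪ X.biUnion (fun x => G.neighborFinset x)
  · rcases mem_union.mp hwX with hwX | hwN
    · exact Or.inl (mem_union_right _ hwX)
    · obtain ⟨x, hx, hxw⟩ := mem_biUnion.mp hwN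
      exact Or.inr ⟨x, mem_union_right _ hx, (G.mem_neighborFinset x w).mp hxw⟩
  · rcases hS w (mem_sdiff.mpr ⟨hw, hwX⟩) with hwS | ⟨s, hs, hsw⟩
    · exact Or.inl (mem_union_left _ hwS)
    · exact Or.inr ⟨s, mem_union_left _ hs, hsw⟩

end SimpleGraph

theorem lossy_rule_lifting_general {V : Type*} [Fintype V] [DecidableEq V]
    (G : SimpleGraph V) [DecidableRel G.Adj] (Vb X S' : Finset V) (ψ : V → V)
    (hmaps : ∀ x ∈ X, ψ x ∈ Vb \ X)
    (h2 : ∀ x₁ ∈ X, ∀ x₂ ∈ X, ψ x₂ ∉ G.neighborFinset x₁)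
    (h3 : ∀ x₁ ∈ X, ∀ x₂ ∈ X, x₁ ≠ x₂ →
      Disjoint (insert (ψ x₁) (G.neighborFinset (ψ x₁)))
        (insert (ψ x₂) (G.neighborFinset (ψ x₂))))
    (hS' : ∀ w ∈ Vb \ (X ∪ X.biUnion (fun x => G.neighborFinset x)), w ∈ S' ∨ ∃ s ∈ S', G.Adj s w) :
    (∀ w ∈ Vb, w ∈ S' ∪ X ∨ ∃ s ∈ S' ∪ X, G.Adj s w) ∧ (S' ∪ X).card ≤ 2 * S'.card := by
  have hdom : G.Dominates S' (Vb \ (X ∪ X.biUnion (fun x => G.neighborFinset x))) := hS'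
  have hψ : ∀ x ∈ X, ψ x ∈ Vb \ (X ∪ X.biUnion (fun x => G.neighborFinset x)) := fun x hx => by
    obtain ⟨hψVb, hψX⟩ := mem_sdiff.mp (hmaps x hx)
    refine mem_sdiff.mpr ⟨hψVb, fun hmem => ?_⟩
    rcases mem_union.mp hmem with hψX' | hψN
    · exact hψX hψX'
    · obtain ⟨x₁, hx₁, hadj⟩ := mem_biUnion.mp hψN
      exact h2 x₁ hx₁ x hx hadj
  have hX : #X ≤ #S' := card_le_card_of_pairwiseDisjoint_meet h3 fun x hx =>
    hdom.exists_mem_insert_neighborFinset (hψ x hx)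
  exact ⟨hdom.union_of_sdiff, by linarith [card_union_le S' X]⟩

theorem lossy_rule_lifting {V : Type*} [Fintype V] [DecidableEq V]
    (G : SimpleGraph V) [DecidableRel G.Adj] (Vb X S' : Finset V) (ψ : V → V)
    (hXVb : X ⊆ Vb)
    (hmaps : ∀ x ∈ X, ψ x ∈ Vb \ X)
    (hinj : Set.InjOn ψ ↑X)
    (h1 : ∀ x ∈ X, ψ x ∉ insert x (G.neighborFinset x))
    (h2 : ∀ x₁ ∈ X, ∀ x₂ ∈ X, ψ x₂ ∉ G.neighborFinset x₁)
    (h3 : ∀ x₁ ∈ X, ∀ x₂ ∈ X, x₁ ≠ x₂ →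
      Disjoint (insert (ψ x₁) (G.neighborFinset (ψ x₁)))
        (insert (ψ x₂) (G.neighborFinset (ψ x₂))))
    (hS' : ∀ w ∈ Vb \ (X ∪ X.biUnion (fun x => G.neighborFinset x)), w ∈ S' ∨ ∃ s ∈ S', G.Adj s w) :
    (∀ w ∈ Vb, w ∈ S' ∪ X ∨ ∃ s ∈ S' ∪ X, G.Adj s w) ∧ (S' ∪ X).card ≤ 2 * S'.card :=
  lossy_rule_lifting_general G Vb X S' ψ hmaps h2 h3 hS'
end

section
/- Let G be a finite simple graph, X ⊆ V(G), and ψ : X → V(G) \ X injective with pairwise disjoint closed neighborhoods of images and with image disjoint from N[X]. Let OPT' be the minimum size of a set dominating V_b \ N[X] and OPT the minimum size of a set dominating V_b, where ψ maps into V_b \ X ⊆ V_b and conditions (1)-(3) of the 2-approximate rule hold. Then for any S' dominating V_b \ N[X], |S' ∪ X| / OPT ≤ 2 · |S'| / OPT'. -/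
theorem lossy_rule_two_approx {V : Type*} [Fintype V] [DecidableEq V]
    (G : SimpleGraph V) [DecidableRel G.Adj] (Vb X S' : Finset V) (ψ : V → V)
    (OPT OPT' : ℕ)
    (hXVb : X ⊆ Vb)
    (hmaps : ∀ x ∈ X, ψ x ∈ Vb \ X)
    (hinj : Set.InjOn ψ ↑X)
    (h1 : ∀ x ∈ X, ψ x ∉ insert x (G.neighborFinset x))
    (h2 : ∀ x₁ ∈ X, ∀ x₂ ∈ X, ψ x₂ ∉ G.neighborFinset x₁)
    (h3 : ∀ x₁ ∈ X, ∀ x₂ ∈ X, x₁ ≠ x₂ →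
      Disjoint (insert (ψ x₁) (G.neighborFinset (ψ x₁)))
        (insert (ψ x₂) (G.neighborFinset (ψ x₂))))
    (hOPT : OPT = sInf {n | ∃ T : Finset V,
        (∀ w ∈ Vb, w ∈ T ∨ ∃ s ∈ T, G.Adj s w) ∧ T.card = n})
    (hOPT' : OPT' = sInf {n | ∃ T : Finset V,
        (∀ w ∈ Vb \ (X ∪ X.biUnion (fun x => G.neighborFinset x)), w ∈ T ∨ ∃ s ∈ T, G.Adj s w) ∧
          T.card = n})
    (hex : ∃ T : Finset V, ∀ w ∈ Vb, w ∈ T ∨ ∃ s ∈ T, G.Adj s w)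
    (hOPT'pos : 1 ≤ OPT')
    (hS' : ∀ w ∈ Vb \ (X ∪ X.biUnion (fun x => G.neighborFinset x)), w ∈ S' ∨ ∃ s ∈ S', G.Adj s w) :
    ((S' ∪ X).card : ℝ) / OPT ≤ 2 * S'.card / OPT' := by
  classical
  obtain ⟨T0, hT0⟩ := hex
  have hne : {n | ∃ T : Finset V,
      (∀ w ∈ Vb, w ∈ T ∨ ∃ s ∈ T, G.Adj s w) ∧ T.card = n}.Nonempty :=
    ⟨T0.card, T0, hT0, rfl⟩
  obtain ⟨T, hTdom, hTcard⟩ := Nat.sInf_mem hne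
  -- OPT' ≤ |S'|
  have hS'card : OPT' ≤ S'.card := by
    rw [hOPT']
    exact Nat.sInf_le ⟨S', hS', rfl⟩
  -- OPT' ≤ OPT
  have hle : OPT' ≤ OPT := by
    rw [hOPT', ← hOPT] at *
    rw [← hTcard]
    exact Nat.sInf_le ⟨T, fun w hw => hTdom w (Finset.mem_sdiff.mp hw).1, rfl⟩
  -- |X| ≤ OPT
  have hwit : ∀ x ∈ X, ∃ s ∈ T, s ∈ insert (ψ x) (G.neighborFinset (ψ x)) := by
    intro x hx
    have hψ : ψ x ∈ Vb := (Finset.mem_sdiff.mp (hmaps x hx)).1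
    rcases hTdom (ψ x) hψ with h | ⟨s, hs, hadj⟩
    · exact ⟨ψ x, h, Finset.mem_insert_self _ _⟩
    · exact ⟨s, hs, Finset.mem_insert_of_mem (by
        rw [SimpleGraph.mem_neighborFinset]; exact hadj.symm)⟩
  choose! g hg1 hg2 using hwit
  have hX : X.card ≤ OPT := by
    rw [hOPT, ← hTcard]
    apply Finset.card_le_card_of_injOn g (fun x hx => hg1 x hx)
    intro x₁ hx₁ x₂ hx₂ heq
    by_contra hne'
    have hd := h3 x₁ hx₁ x₂ hx₂ hne'
    exact Finset.disjoint_left.mp hd (hg2 x₁ hx₁) (heq ▸ hg2 x₂ hx₂)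
  -- arithmetic
  have hOPTpos : 0 < OPT := lt_of_lt_of_le hOPT'pos hle
  have hcard : (S' ∪ X).card ≤ S'.card + X.card := Finset.card_union_le _ _
  rw [div_le_div_iff₀ (by exact_mod_cast hOPTpos) (by exact_mod_cast hOPT'pos)]
  have h1' : (S' ∪ X).card * OPT' ≤ 2 * S'.card * OPT := by
    calc (S' ∪ X).card * OPT' ≤ (S'.card + X.card) * OPT' :=
          Nat.mul_le_mul_right _ hcard
      _ = S'.card * OPT' + X.card * OPT' := by ring
      _ ≤ S'.card * OPT + OPT * S'.card :=
          Nat.add_le_add (Nat.mul_le_mul_left _ hle) (Nat.mul_le_mul hX hS'card)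
      _ = 2 * S'.card * OPT := by ring
  exact_mod_cast h1'
end
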